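/- For μ ∈ 𝒫(X), let f_μ(x) denote the unique maximizer over U of Q^{reg,*}_μ(x,·) (unique by ρ-strong concavity in u). Then for all x, x̂ ∈ X and μ, μ̂ ∈ 𝒫(X), ‖f_μ(x) − f_{μ̂}(x̂)‖₁ ≤ (1/ρ) K_{H1} (1_{x≠x̂} + ‖μ − μ̂‖₁), where K_{H1} := Q_Lip/(1 − β) and Q_Lip := L1/(1 − βK1/2). (Lemma 4.) -/

import Mathlib

/-!
Write `Q_μ(y, u) = ⟨q_μ(y, ·), u⟩ - Ω u` with action values
`q_μ(y, a) = r(y, a, μ) + β ∑_z V_μ z p(z | y, a, μ)` and `V_μ = max_u Q_μ(·, u)`.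
The maximum of `⟨g, ·⟩ - Ω` over the simplex is `1`-Lipschitz in `g` for the sup norm, and
`|∑ V (p - p')|` is at most half the oscillation of `V` times `‖p - p'‖₁`. Hence the oscillation
of `V_μ` is at most `L1 + β K1 / 2 · osc V_μ`, i.e. at most `Q_Lip`, and then
`‖V_μ - V_μ̂‖∞ ≤ Q_Lip ‖μ - μ̂‖₁ + β ‖V_μ - V_μ̂‖∞`, i.e. `‖V_μ - V_μ̂‖∞ ≤ K_H1 ‖μ - μ̂‖₁`.
Together, `‖q_μ(x, ·) - q_μ̂(x̂, ·)‖∞ ≤ K_H1 (1_{x ≠ x̂} + ‖μ - μ̂‖₁)`, and `ρ`-strong convexity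
of `Ω` makes the regularized argmax `1/ρ`-Lipschitz from the sup norm to `ℓ¹`.
-/

namespace MFG

open Finset

def IsProb {E : Type*} [Fintype E] (μ : E → ℝ) : Prop :=
  (∀ e, 0 ≤ μ e) ∧ ∑ e, μ e = 1

def l1 {E : Type*} [Fintype E] (μ ν : E → ℝ) : ℝ :=
  ∑ e, |μ e - ν e|

def ind {E : Type*} [DecidableEq E] (x y : E) : ℝ :=
  if x = y then 0 else 1

def RewardLip {X A : Type*} [Fintype X] [Fintype A] [DecidableEq X] [DecidableEq A]
    (r : X → A → (X → ℝ) → ℝ) (L1 : ℝ) : Prop :=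
  ∀ x x' a a' μ μ', IsProb μ → IsProb μ' →
    |r x a μ - r x' a' μ'| ≤ L1 * (ind x x' + 2 * ind a a' + l1 μ μ')

def KernelLip {X A : Type*} [Fintype X] [Fintype A] [DecidableEq X] [DecidableEq A]
    (p : X → A → (X → ℝ) → X → ℝ) (K1 : ℝ) : Prop :=
  ∀ x x' a a' μ μ', IsProb μ → IsProb μ' →
    l1 (p x a μ) (p x' a' μ') ≤ K1 * (ind x x' + 2 * ind a a' + l1 μ μ')

def IsKernel {X A : Type*} [Fintype X] [Fintype A]
    (p : X → A → (X → ℝ) → X → ℝ) : Prop :=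
  ∀ x a μ, IsProb μ → IsProb (p x a μ)

def RewardNonneg {X A : Type*} [Fintype X] [Fintype A]
    (r : X → A → (X → ℝ) → ℝ) : Prop :=
  ∀ x a μ, IsProb μ → 0 ≤ r x a μ

def OmegaLip {A : Type*} [Fintype A] (Ω : (A → ℝ) → ℝ) (Lreg : ℝ) : Prop :=
  ∀ u v, IsProb u → IsProb v → |Ω u - Ω v| ≤ Lreg * l1 u v

def StrongConvex {A : Type*} [Fintype A] (Ω : (A → ℝ) → ℝ)
    (DΩ : (A → ℝ) → (A → ℝ)) (ρ : ℝ) : Prop :=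
  ∀ u v, IsProb u → IsProb v →
    Ω u + (∑ a, DΩ u a * (v a - u a)) + ρ / 2 * (l1 u v) ^ 2 ≤ Ω v

noncomputable def Tbell {X A : Type*} [Fintype X] [Fintype A]
    (r : X → A → (X → ℝ) → ℝ) (p : X → A → (X → ℝ) → X → ℝ)
    (Ω : (A → ℝ) → ℝ) (β : ℝ) (μ : X → ℝ) (v : X → ℝ) (x : X) : ℝ :=
  ⨆ u : {w : A → ℝ // IsProb w},
    ((∑ a, r x a μ * u.1 a) - Ω u.1 + β * ∑ y, v y * (∑ a, p x a μ y * u.1 a))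

noncomputable def Qmax {X A : Type*} [Fintype A] (Q : X → (A → ℝ) → ℝ) (y : X) : ℝ :=
  ⨆ u : {w : A → ℝ // IsProb w}, Q y u.1

noncomputable def Lbell {X A : Type*} [Fintype X] [Fintype A]
    (r : X → A → (X → ℝ) → ℝ) (p : X → A → (X → ℝ) → X → ℝ)
    (Ω : (A → ℝ) → ℝ) (β : ℝ) (μ : X → ℝ) (Q : X → (A → ℝ) → ℝ)
    (x : X) (u : A → ℝ) : ℝ :=
  (∑ a, r x a μ * u a) - Ω u + β * ∑ y, Qmax Q y * (∑ a, p x a μ y * u a)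

def BddFixedPoint {X A : Type*} [Fintype X] [Fintype A]
    (r : X → A → (X → ℝ) → ℝ) (p : X → A → (X → ℝ) → X → ℝ)
    (Ω : (A → ℝ) → ℝ) (β : ℝ) (μ : X → ℝ) (Q : X → (A → ℝ) → ℝ) : Prop :=
  (∃ C, ∀ x u, IsProb u → |Q x u| ≤ C) ∧
  (∀ x u, IsProb u → Q x u = Lbell r p Ω β μ Q x u)


lemma l1_nonneg {E : Type*} [Fintype E] (μ ν : E → ℝ) : 0 ≤ l1 μ ν :=
  sum_nonneg fun _ _ => abs_nonneg _

lemma l1_comm {E : Type*} [Fintype E] (μ ν : E → ℝ) : l1 μ ν = l1 ν μ :=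
  sum_congr rfl fun _ _ => abs_sub_comm _ _

lemma ind_self {E : Type*} [DecidableEq E] (x : E) : ind x x = 0 := by simp [ind]

lemma ind_nonneg {E : Type*} [DecidableEq E] (x y : E) : 0 ≤ ind x y := by
  unfold ind; split <;> norm_num

lemma ind_le_one {E : Type*} [DecidableEq E] (x y : E) : ind x y ≤ 1 := by
  unfold ind; split <;> norm_num

lemma IsProb.nonempty {E : Type*} [Fintype E] {u : E → ℝ} (hu : IsProb u) : Nonempty E := by
  by_contra hE
  have h := hu.2
  rw [not_nonempty_iff] at hE
  simp at h

lemma abs_sum_mul_le_of_isProb {E : Type*} [Fintype E] {t u : E → ℝ} {M : ℝ}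
    (hu : IsProb u) (ht : ∀ e, |t e| ≤ M) : |∑ e, t e * u e| ≤ M :=
  calc |∑ e, t e * u e| ≤ ∑ e, |t e| * u e := by
        refine (abs_sum_le_sum_abs _ _).trans_eq (sum_congr rfl fun e _ => ?_)
        rw [abs_mul, abs_of_nonneg (hu.1 e)]
    _ ≤ ∑ e, M * u e := sum_le_sum fun e _ => mul_le_mul_of_nonneg_right (ht e) (hu.1 e)
    _ = M := by rw [← mul_sum, hu.2, mul_one]

/-- Since `q - q'` has total mass zero, `g` may be recentred at the midpoint of its range. -/
lemma abs_sum_mul_sub_le_half_mul_l1 {E : Type*} [Fintype E] {g q q' : E → ℝ} {M : ℝ}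
    (hg : ∀ e e', |g e - g e'| ≤ M) (hq : ∑ e, q e = ∑ e, q' e) :
    |∑ e, g e * (q e - q' e)| ≤ M / 2 * l1 q q' := by
  cases isEmpty_or_nonempty E
  · simp [l1]
  obtain ⟨e₁, he₁⟩ := Finite.exists_max g
  obtain ⟨e₂, he₂⟩ := Finite.exists_min g
  set m := (g e₁ + g e₂) / 2 with hm
  have hgm : ∀ e, |g e - m| ≤ M / 2 := fun e => by
    have := (le_abs_self _).trans (hg e₁ e₂)
    rw [abs_le, hm]; constructor <;> linarith [he₁ e, he₂ e]
  have hcentre : ∑ e, g e * (q e - q' e) = ∑ e, (g e - m) * (q e - q' e) := by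
    simp only [sub_mul, sum_sub_distrib, ← mul_sum, hq, sub_self, mul_zero, sub_zero]
  calc |∑ e, g e * (q e - q' e)| = |∑ e, (g e - m) * (q e - q' e)| := by rw [hcentre]
    _ ≤ ∑ e, |g e - m| * |q e - q' e| := (abs_sum_le_sum_abs _ _).trans_eq (by simp [abs_mul])
    _ ≤ ∑ e, M / 2 * |q e - q' e| :=
        sum_le_sum fun e _ => mul_le_mul_of_nonneg_right (hgm e) (abs_nonneg _)
    _ = M / 2 * l1 q q' := by rw [l1, mul_sum]

lemma le_div_of_forall_le_add_mul {ι : Type*} [Finite ι] {D : ι → ℝ} {a b : ℝ} (hb : b < 1)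
    (h : ∀ M, (∀ i, D i ≤ M) → ∀ i, D i ≤ a + b * M) (i : ι) : D i ≤ a / (1 - b) := by
  have : Nonempty ι := ⟨i⟩
  obtain ⟨i₀, hi₀⟩ := Finite.exists_max D
  have := h (D i₀) hi₀ i₀
  rw [le_div_iff₀ (by linarith)]
  nlinarith [hi₀ i]

lemma add_mul_div_one_sub {a c : ℝ} (hc : c < 1) : a + c * (a / (1 - c)) = a / (1 - c) := by
  field_simp [(by linarith : 1 - c ≠ 0)]
  ring

section Regularized

variable {A : Type*} [Fintype A] {Ω : (A → ℝ) → ℝ}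

def regValue (Ω : (A → ℝ) → ℝ) (g u : A → ℝ) : ℝ :=
  ∑ a, g a * u a - Ω u

def IsRegMax (Ω : (A → ℝ) → ℝ) (g u : A → ℝ) : Prop :=
  IsProb u ∧ ∀ v, IsProb v → regValue Ω g v ≤ regValue Ω g u

lemma regValue_sub_regValue (g g' u : A → ℝ) :
    regValue Ω g u - regValue Ω g' u = ∑ a, (g a - g' a) * u a := by
  simp only [regValue, sub_mul, sum_sub_distrib]; ring

lemma IsRegMax.abs_sub_le {g g' u u' : A → ℝ} {K : ℝ} (hu : IsRegMax Ω g u)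
    (hu' : IsRegMax Ω g' u') (hK : ∀ a, |g a - g' a| ≤ K) :
    |regValue Ω g u - regValue Ω g' u'| ≤ K := by
  have h₁ := abs_sum_mul_le_of_isProb hu.1 hK
  have h₂ := abs_sum_mul_le_of_isProb hu'.1 hK
  rw [← regValue_sub_regValue] at h₁ h₂
  rw [abs_le] at h₁ h₂ ⊢
  constructor <;> linarith [hu.2 u' hu'.1, hu'.2 u hu.1]

lemma IsProb.combo {u v : A → ℝ} (hu : IsProb u) (hv : IsProb v) {t : ℝ} (ht₀ : 0 ≤ t)
    (ht₁ : t ≤ 1) : IsProb (fun a => (1 - t) * u a + t * v a) := by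
  refine ⟨fun a => ?_, ?_⟩
  · have := hu.1 a; have := hv.1 a
    have : 0 ≤ 1 - t := by linarith
    positivity
  · simp only [sum_add_distrib, ← mul_sum, hu.2, hv.2]; ring

lemma StrongConvex.apply_combo_add_le {DΩ : (A → ℝ) → (A → ℝ)} {ρ : ℝ}
    (hΩ : StrongConvex Ω DΩ ρ) {u v : A → ℝ} (hu : IsProb u) (hv : IsProb v) {t : ℝ}
    (ht₀ : 0 ≤ t) (ht₁ : t ≤ 1) :
    Ω (fun a => (1 - t) * u a + t * v a) + ρ / 2 * (t * (1 - t)) * l1 u v ^ 2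
      ≤ (1 - t) * Ω u + t * Ω v := by
  set w : A → ℝ := fun a => (1 - t) * u a + t * v a
  have hw : IsProb w := hu.combo hv ht₀ ht₁
  have hwu : l1 w u = t * l1 u v := by
    rw [l1, l1, mul_sum]
    refine sum_congr rfl fun a _ => ?_
    rw [show w a - u a = t * (v a - u a) by simp only [w]; ring, abs_mul, abs_of_nonneg ht₀,
      abs_sub_comm]
  have hwv : l1 w v = (1 - t) * l1 u v := by
    rw [l1, l1, mul_sum]
    refine sum_congr rfl fun a _ => ?_
    rw [show w a - v a = (1 - t) * (u a - v a) by simp only [w]; ring, abs_mul,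
      abs_of_nonneg (by linarith)]
  have hgrad : (1 - t) * ∑ a, DΩ w a * (u a - w a) + t * ∑ a, DΩ w a * (v a - w a) = 0 := by
    rw [mul_sum, mul_sum, ← sum_add_distrib]
    exact sum_eq_zero fun a _ => by simp only [w]; ring
  have h₁ := hΩ w u hw hu
  have h₂ := hΩ w v hw hv
  rw [hwu] at h₁
  rw [hwv] at h₂
  nlinarith [mul_le_mul_of_nonneg_left h₁ (by linarith : (0 : ℝ) ≤ 1 - t),
    mul_le_mul_of_nonneg_left h₂ ht₀]

/-- `DΩ` need not be the derivative of `Ω`, so there is no first-order optimality condition: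
instead compare `u` with `(1 - t) u + t v` and let `t → 0⁺`. -/
lemma StrongConvex.sq_l1_le_of_isRegMax {DΩ : (A → ℝ) → (A → ℝ)} {ρ : ℝ}
    (hΩ : StrongConvex Ω DΩ ρ) {g u v : A → ℝ} (hu : IsRegMax Ω g u) (hv : IsProb v) :
    ρ / 2 * l1 u v ^ 2 ≤ regValue Ω g u - regValue Ω g v := by
  have hstep : ∀ t ∈ Set.Ioc (0 : ℝ) 1,
      ρ / 2 * (1 - t) * l1 u v ^ 2 ≤ regValue Ω g u - regValue Ω g v := by
    rintro t ⟨ht₀, ht₁⟩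
    have hcombo := hΩ.apply_combo_add_le hu.1 hv ht₀.le ht₁
    have hmax := hu.2 _ (hu.1.combo hv ht₀.le ht₁)
    have hlin : ∑ a, g a * ((1 - t) * u a + t * v a)
        = (1 - t) * ∑ a, g a * u a + t * ∑ a, g a * v a := by
      rw [mul_sum, mul_sum, ← sum_add_distrib]
      exact sum_congr rfl fun a _ => by ring
    simp only [regValue, hlin] at hmax ⊢
    refine le_of_mul_le_mul_left ?_ ht₀
    nlinarith
  have hlim : Filter.Tendsto (fun t : ℝ => ρ / 2 * (1 - t) * l1 u v ^ 2)
      (nhdsWithin 0 (Set.Ioi 0)) (nhds (ρ / 2 * l1 u v ^ 2)) := by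
    apply tendsto_nhdsWithin_of_tendsto_nhds
    convert (show Continuous (fun t : ℝ => ρ / 2 * (1 - t) * l1 u v ^ 2) by fun_prop).tendsto 0
      using 2
    ring
  exact le_of_tendsto hlim (Filter.eventually_of_mem (Ioc_mem_nhdsGT one_pos) hstep)

/-- Adding the quadratic growth at `u` and at `u'` gives `ρ ‖u - u'‖₁² ≤ ⟨g - g', u - u'⟩`. -/
lemma StrongConvex.l1_le_of_isRegMax {DΩ : (A → ℝ) → (A → ℝ)} {ρ : ℝ} (hρ : 0 < ρ)
    (hΩ : StrongConvex Ω DΩ ρ) {g g' u u' : A → ℝ} {K : ℝ} (hu : IsRegMax Ω g u)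
    (hu' : IsRegMax Ω g' u') (hK : ∀ a, |g a - g' a| ≤ K) : l1 u u' ≤ K / ρ := by
  have : Nonempty A := hu.1.nonempty
  have hK₀ : 0 ≤ K := (abs_nonneg _).trans (hK (Classical.arbitrary A))
  have hgrowth := hΩ.sq_l1_le_of_isRegMax hu hu'.1
  have hgrowth' := hΩ.sq_l1_le_of_isRegMax hu' hu.1
  rw [l1_comm] at hgrowth'
  have hcross : regValue Ω g u - regValue Ω g u' + (regValue Ω g' u' - regValue Ω g' u)
      = ∑ a, (g a - g' a) * (u a - u' a) := by
    simp only [regValue, mul_sub, sub_mul, sum_sub_distrib]; ring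
  have hspan : |∑ a, (g a - g' a) * (u a - u' a)| ≤ 2 * K / 2 * l1 u u' := by
    refine abs_sum_mul_sub_le_half_mul_l1 (fun a b => ?_) (by rw [hu.1.2, hu'.1.2])
    calc |g a - g' a - (g b - g' b)| ≤ |g a - g' a| + |g b - g' b| := abs_sub _ _
      _ ≤ 2 * K := by linarith [hK a, hK b]
  have hquad : ρ * l1 u u' ^ 2 ≤ K * l1 u u' := by
    linarith [le_abs_self (∑ a, (g a - g' a) * (u a - u' a))]
  rw [le_div_iff₀ hρ]
  rcases (l1_nonneg u u').eq_or_lt with h | h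
  · rw [← h]; linarith
  · nlinarith

end Regularized

lemma Qmax_eq_of_isMax {X A : Type*} [Fintype A] {Q : X → (A → ℝ) → ℝ}
    (hQ : ∃ C, ∀ x u, IsProb u → |Q x u| ≤ C)
    {y : X} {u₀ : A → ℝ} (hu₀ : IsProb u₀) (hmax : ∀ u, IsProb u → Q y u ≤ Q y u₀) :
    Qmax Q y = Q y u₀ := by
  obtain ⟨C, hC⟩ := hQ
  have : Nonempty {w : A → ℝ // IsProb w} := ⟨⟨u₀, hu₀⟩⟩
  refine le_antisymm (ciSup_le fun u => hmax u.1 u.2) ?_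
  refine le_ciSup (f := fun u : {w : A → ℝ // IsProb w} => Q y u.1) ⟨C, ?_⟩ ⟨u₀, hu₀⟩
  rintro _ ⟨u, rfl⟩
  exact (abs_le.mp (hC y u.1 u.2)).2

section Bellman

variable {X A : Type*} [Fintype X] [Fintype A]
  {r : X → A → (X → ℝ) → ℝ} {p : X → A → (X → ℝ) → X → ℝ} {Ω : (A → ℝ) → ℝ}
  {L1 K1 β : ℝ} {μ μ' : X → ℝ}

def actionValue (r : X → A → (X → ℝ) → ℝ) (p : X → A → (X → ℝ) → X → ℝ) (β : ℝ)
    (μ V : X → ℝ) (y : X) (a : A) : ℝ :=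
  r y a μ + β * ∑ z, V z * p y a μ z

variable {Q Q' : X → (A → ℝ) → ℝ} {f f' : X → A → ℝ}

lemma BddFixedPoint.eq_regValue (hQ : BddFixedPoint r p Ω β μ Q) (hf : ∀ x, IsProb (f x))
    (hfmax : ∀ x u, IsProb u → Q x u ≤ Q x (f x)) {y : X} {u : A → ℝ} (hu : IsProb u) :
    Q y u = regValue Ω (actionValue r p β μ (fun z => Q z (f z)) y) u := by
  have hQmax : ∀ z, Qmax Q z = Q z (f z) := fun z =>
    Qmax_eq_of_isMax hQ.1 (hf z) (hfmax z)
  rw [hQ.2 y u hu, Lbell, regValue]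
  simp only [hQmax, actionValue, add_mul, sum_add_distrib, mul_sum, sum_mul]
  rw [sum_comm (f := fun z a => β * (Q z (f z) * (p y a μ z * u a)))]
  ring_nf

lemma BddFixedPoint.isRegMax (hQ : BddFixedPoint r p Ω β μ Q) (hf : ∀ x, IsProb (f x))
    (hfmax : ∀ x u, IsProb u → Q x u ≤ Q x (f x)) (y : X) :
    IsRegMax Ω (actionValue r p β μ (fun z => Q z (f z)) y) (f y) := by
  refine ⟨hf y, fun v hv => ?_⟩
  rw [← hQ.eq_regValue hf hfmax hv, ← hQ.eq_regValue hf hfmax (hf y)]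
  exact hfmax y v hv



variable [DecidableEq X] [DecidableEq A]

lemma abs_actionValue_sub_le (hr : RewardLip r L1) (hp : KernelLip p K1) (hp_prob : IsKernel p)
    (hβ : 0 ≤ β) (hμ : IsProb μ) (hμ' : IsProb μ') {V V' : X → ℝ} {M W : ℝ}
    (hV : ∀ z z', |V z - V z'| ≤ M) (hVV' : ∀ z, |V z - V' z| ≤ W) (y y' : X) (a : A) :
    |actionValue r p β μ V y a - actionValue r p β μ' V' y' a|
      ≤ (L1 + β * K1 / 2 * M) * (ind y y' + l1 μ μ') + β * W := by
  have hM : 0 ≤ M := (abs_nonneg _).trans (hV y y)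
  have hreward := hr y y' a a μ μ' hμ hμ'
  have hkernel := hp y y' a a μ μ' hμ hμ'
  rw [ind_self, mul_zero, add_zero] at hreward hkernel
  have hvalue : |∑ z, (V z - V' z) * p y' a μ' z| ≤ W :=
    abs_sum_mul_le_of_isProb (hp_prob y' a μ' hμ') hVV'
  have hmass : ∑ z, p y a μ z = ∑ z, p y' a μ' z := by
    rw [(hp_prob y a μ hμ).2, (hp_prob y' a μ' hμ').2]
  have htransition :
      |∑ z, V z * (p y a μ z - p y' a μ' z)| ≤ M / 2 * (K1 * (ind y y' + l1 μ μ')) :=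
    (abs_sum_mul_sub_le_half_mul_l1 hV hmass).trans
      (mul_le_mul_of_nonneg_left hkernel (by linarith))
  have hsplit : actionValue r p β μ V y a - actionValue r p β μ' V' y' a
      = (r y a μ - r y' a μ') + β * (∑ z, V z * (p y a μ z - p y' a μ' z)
          + ∑ z, (V z - V' z) * p y' a μ' z) := by
    simp only [actionValue, mul_sub, sub_mul, sum_sub_distrib]; ring
  rw [hsplit]
  calc _ ≤ |r y a μ - r y' a μ'| + β * (|∑ z, V z * (p y a μ z - p y' a μ' z)|
          + |∑ z, (V z - V' z) * p y' a μ' z|) := by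
        refine (abs_add_le _ _).trans (add_le_add le_rfl ?_)
        rw [abs_mul, abs_of_nonneg hβ]
        exact mul_le_mul_of_nonneg_left (abs_add_le _ _) hβ
    _ ≤ L1 * (ind y y' + l1 μ μ') + β * (M / 2 * (K1 * (ind y y' + l1 μ μ')) + W) := by
        gcongr
    _ = _ := by ring

lemma abs_value_sub_le (hL1 : 0 ≤ L1) (hK1 : 0 ≤ K1) (hβ : 0 ≤ β) (hβK : β * K1 / 2 < 1)
    (hr : RewardLip r L1) (hp : KernelLip p K1) (hp_prob : IsKernel p) (hμ : IsProb μ)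
    (hQ : BddFixedPoint r p Ω β μ Q) (hf : ∀ x, IsProb (f x))
    (hfmax : ∀ x u, IsProb u → Q x u ≤ Q x (f x)) (z z' : X) :
    |Q z (f z) - Q z' (f z')| ≤ L1 / (1 - β * K1 / 2) := by
  refine le_div_of_forall_le_add_mul (D := fun y : X × X => |Q y.1 (f y.1) - Q y.2 (f y.2)|) hβK
    (fun M hM y => ?_) (z, z')
  have hM₀ : 0 ≤ M := (abs_nonneg _).trans (hM (y.1, y.1))
  have hG := hQ.isRegMax hf hfmax
  rw [hQ.eq_regValue hf hfmax (hf y.1), hQ.eq_regValue hf hfmax (hf y.2)]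
  refine ((hG y.1).abs_sub_le (hG y.2) fun a => abs_actionValue_sub_le (W := 0) hr hp hp_prob hβ
    hμ hμ (fun z z' => hM (z, z')) (fun z => by simp) y.1 y.2 a).trans ?_
  have hcoeff : 0 ≤ L1 + β * K1 / 2 * M := by positivity
  simpa [l1] using mul_le_of_le_one_right hcoeff (ind_le_one y.1 y.2)

lemma abs_value_sub_value_le (hL1 : 0 ≤ L1) (hK1 : 0 ≤ K1) (hβ : 0 ≤ β) (hβ1 : β < 1)
    (hβK : β * K1 / 2 < 1) (hr : RewardLip r L1) (hp : KernelLip p K1) (hp_prob : IsKernel p)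
    (hμ : IsProb μ) (hμ' : IsProb μ') (hQ : BddFixedPoint r p Ω β μ Q)
    (hQ' : BddFixedPoint r p Ω β μ' Q') (hf : ∀ x, IsProb (f x)) (hf' : ∀ x, IsProb (f' x))
    (hfmax : ∀ x u, IsProb u → Q x u ≤ Q x (f x))
    (hf'max : ∀ x u, IsProb u → Q' x u ≤ Q' x (f' x)) (z : X) :
    |Q z (f z) - Q' z (f' z)| ≤ L1 / (1 - β * K1 / 2) / (1 - β) * l1 μ μ' := by
  rw [div_mul_eq_mul_div]
  refine le_div_of_forall_le_add_mul (D := fun y => |Q y (f y) - Q' y (f' y)|) hβ1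
    (fun M hM y => ?_) z
  rw [hQ.eq_regValue hf hfmax (hf y), hQ'.eq_regValue hf' hf'max (hf' y)]
  refine ((hQ.isRegMax hf hfmax y).abs_sub_le (hQ'.isRegMax hf' hf'max y) fun a =>
    abs_actionValue_sub_le hr hp hp_prob hβ hμ hμ'
      (abs_value_sub_le hL1 hK1 hβ hβK hr hp hp_prob hμ hQ hf hfmax) hM y y a).trans_eq ?_
  rw [ind_self, zero_add, add_mul_div_one_sub hβK]

end Bellman

theorem statement9_general {X A : Type*} [Fintype X] [Fintype A]
    [DecidableEq X] [DecidableEq A]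
    (r : X → A → (X → ℝ) → ℝ) (p : X → A → (X → ℝ) → X → ℝ)
    (L1 K1 : ℝ) (hL1 : 0 ≤ L1) (hK1 : 0 ≤ K1)
    (hr : RewardLip r L1)
    (hp_prob : IsKernel p) (hp : KernelLip p K1)
    (Ω : (A → ℝ) → ℝ) (DΩ : (A → ℝ) → (A → ℝ)) (ρ : ℝ) (hρ : 0 < ρ)
    (hΩ : StrongConvex Ω DΩ ρ)
    (β : ℝ) (hβ0 : 0 < β) (hβ1 : β < 1) (hβK : β * K1 / 2 < 1)
    (μ μ' : X → ℝ) (hμ : IsProb μ) (hμ' : IsProb μ')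
    (Q Q' : X → (A → ℝ) → ℝ)
    (hQ : BddFixedPoint r p Ω β μ Q) (hQ' : BddFixedPoint r p Ω β μ' Q')
    (f f' : X → A → ℝ)
    (hf : ∀ x, IsProb (f x)) (hf' : ∀ x, IsProb (f' x))
    (hfmax : ∀ x u, IsProb u → Q x u ≤ Q x (f x))
    (hf'max : ∀ x u, IsProb u → Q' x u ≤ Q' x (f' x)) :
    ∀ x x', l1 (f x) (f' x') ≤
      (1 / ρ) * ((L1 / (1 - β * K1 / 2)) / (1 - β)) * (ind x x' + l1 μ μ') := by
  intro x x'
  set qL := L1 / (1 - β * K1 / 2)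
  set kH := qL / (1 - β)
  have hspan := abs_value_sub_le hL1 hK1 hβ0.le hβK hr hp hp_prob hμ hQ hf hfmax
  have hgap := abs_value_sub_value_le hL1 hK1 hβ0.le hβ1 hβK hr hp hp_prob hμ hμ' hQ hQ' hf hf'
    hfmax hf'max
  have hactions : ∀ a, |actionValue r p β μ (fun z => Q z (f z)) x a
      - actionValue r p β μ' (fun z => Q' z (f' z)) x' a| ≤ kH * (ind x x' + l1 μ μ') := by
    intro a
    have hi := ind_nonneg x x'
    calc _ ≤ (L1 + β * K1 / 2 * qL) * (ind x x' + l1 μ μ') + β * (kH * l1 μ μ') :=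
          abs_actionValue_sub_le hr hp hp_prob hβ0.le hμ hμ' hspan hgap x x' a
      _ ≤ qL * (ind x x' + l1 μ μ') + β * (kH * (ind x x' + l1 μ μ')) := by
          rw [add_mul_div_one_sub hβK]; gcongr; linarith
      _ = kH * (ind x x' + l1 μ μ') := by
          linear_combination (ind x x' + l1 μ μ') * add_mul_div_one_sub (a := qL) hβ1
  calc l1 (f x) (f' x') ≤ kH * (ind x x' + l1 μ μ') / ρ :=
        hΩ.l1_le_of_isRegMax hρ (hQ.isRegMax hf hfmax x) (hQ'.isRegMax hf' hf'max x') hactions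
    _ = _ := by ring

/-- Lemma 4: Lipschitz continuity of the optimal policy,
`‖f_μ(x) - f_{μ̂}(x̂)‖₁ ≤ (1/ρ) K_{H1} (1_{x≠x̂} + ‖μ - μ̂‖₁)`. -/
theorem statement9 {X A : Type*} [Fintype X] [Fintype A] [Nonempty X] [Nonempty A]
    [DecidableEq X] [DecidableEq A]
    (r : X → A → (X → ℝ) → ℝ) (p : X → A → (X → ℝ) → X → ℝ)
    (L1 K1 : ℝ) (hL1 : 0 ≤ L1) (hK1 : 0 ≤ K1)
    (hr_nonneg : RewardNonneg r) (hr : RewardLip r L1)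
    (hp_prob : IsKernel p) (hp : KernelLip p K1)
    (Ω : (A → ℝ) → ℝ) (DΩ : (A → ℝ) → (A → ℝ)) (ρ : ℝ) (hρ : 0 < ρ)
    (hΩ : StrongConvex Ω DΩ ρ)
    (β : ℝ) (hβ0 : 0 < β) (hβ1 : β < 1) (hβK : β * K1 / 2 < 1)
    (μ μ' : X → ℝ) (hμ : IsProb μ) (hμ' : IsProb μ')
    (Q Q' : X → (A → ℝ) → ℝ)
    (hQ : BddFixedPoint r p Ω β μ Q) (hQ' : BddFixedPoint r p Ω β μ' Q')
    (f f' : X → A → ℝ)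
    (hf : ∀ x, IsProb (f x)) (hf' : ∀ x, IsProb (f' x))
    (hfmax : ∀ x u, IsProb u → Q x u ≤ Q x (f x))
    (hf'max : ∀ x u, IsProb u → Q' x u ≤ Q' x (f' x)) :
    ∀ x x', l1 (f x) (f' x') ≤
      (1 / ρ) * ((L1 / (1 - β * K1 / 2)) / (1 - β)) * (ind x x' + l1 μ μ') :=
  statement9_general r p L1 K1 hL1 hK1 hr hp_prob hp Ω DΩ ρ hρ hΩ β hβ0 hβ1 hβK μ μ' hμ hμ' Q Q' hQ
    hQ' f f' hf hf' hfmax hf'max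

end MFG
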